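/- arXiv:2605.07152 — 2 statements merged into one kernel-verified Lean document; each statement's English description precedes it below -/
import Mathlib

section
/- Suppose J_n C^T + B J_m D^T = 0, V^T J_n V = J_r, and U = J_r^{-1} V^T J_n. Then B_r = U B, C_r = C V, D_r = D satisfy J_r C_r^T + B_r J_m D_r^T = 0. -/
open Matrix Kronecker

/-- Canonical symplectic matrix `J_k = I_k ⊗ [[0,1],[-1,0]]`. -/
def J (k : ℕ) : Matrix (Fin k × Fin 2) (Fin k × Fin 2) ℝ :=
  (1 : Matrix (Fin k) (Fin k) ℝ) ⊗ₖ !![0, 1; -1, 0]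

lemma JmulJ (k : ℕ) : J k * J k = -1 := by
  have hS : !![(0:ℝ), 1; -1, 0] * !![0, 1; -1, 0] = -1 := by
    ext i j; fin_cases i <;> fin_cases j <;>
      simp [Matrix.mul_fin_two, Matrix.one_apply]
  rw [_root_.J, ← Matrix.mul_kronecker_mul, one_mul, hS]
  ext ⟨i, a⟩ ⟨j, b⟩
  simp [Matrix.kroneckerMap_apply, Matrix.one_apply, Prod.ext_iff]
  aesop

lemma Jinv (k : ℕ) : (J k)⁻¹ = -(J k) := by
  apply Matrix.inv_eq_right_inv
  rw [mul_neg, JmulJ]; simp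

theorem stmt3 (n m r : ℕ)
    (B : Matrix (Fin n × Fin 2) (Fin m × Fin 2) ℝ)
    (C : Matrix (Fin m × Fin 2) (Fin n × Fin 2) ℝ)
    (D : Matrix (Fin m × Fin 2) (Fin m × Fin 2) ℝ)
    (V : Matrix (Fin n × Fin 2) (Fin r × Fin 2) ℝ)
    (hC : J n * Cᵀ + B * J m * Dᵀ = 0)
    (hV : Vᵀ * J n * V = J r)
    (U : Matrix (Fin r × Fin 2) (Fin n × Fin 2) ℝ)
    (hU : U = (J r)⁻¹ * Vᵀ * J n) :
    J r * (C * V)ᵀ + (U * B) * J m * Dᵀ = 0 := by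
  have hBD : B * (J m * Dᵀ) = -(J n * Cᵀ) := by
    rw [← Matrix.mul_assoc]
    exact eq_neg_of_add_eq_zero_right hC
  rw [hU, Jinv]
  simp only [Matrix.transpose_mul, Matrix.mul_assoc]
  rw [hBD, Matrix.mul_neg, ← Matrix.mul_assoc (J n) (J n), JmulJ]
  simp [Matrix.mul_assoc]
end

section
/- Let A = J_n R + (1/2) B J_m B^T J_n with R symmetric, C = J_m B^T J_n, and D = I_{2m}. Then (A,B,C,D) satisfies all three physical realizability identities: A J_n + J_n A^T + B J_m B^T = 0, J_n C^T + B J_m D^T = 0, and D J_m D^T = J_m. -/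
open Matrix Kronecker

lemma J_transpose (k : ℕ) : (_root_.J k)ᵀ = -(_root_.J k) := by
  ext ⟨i, a⟩ ⟨j, b⟩
  fin_cases a <;> fin_cases b <;>
    simp [_root_.J, Matrix.one_apply, Matrix.transpose_apply, eq_comm]

lemma J_mul_J (k : ℕ) : _root_.J k * _root_.J k = -1 := by
  ext ⟨i, a⟩ ⟨j, b⟩
  rw [Matrix.mul_apply, Fintype.sum_prod_type]
  simp [_root_.J, Matrix.one_apply, Fin.sum_univ_two, Finset.sum_ite_eq, ite_and]
  by_cases h : i = j <;> fin_cases a <;> fin_cases b <;>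
    simp [h, Matrix.one_apply, Prod.ext_iff]

theorem stmt6 (n m : ℕ)
    (R : Matrix (Fin n × Fin 2) (Fin n × Fin 2) ℝ)
    (B : Matrix (Fin n × Fin 2) (Fin m × Fin 2) ℝ)
    (hR : Rᵀ = R)
    (A : Matrix (Fin n × Fin 2) (Fin n × Fin 2) ℝ)
    (C : Matrix (Fin m × Fin 2) (Fin n × Fin 2) ℝ)
    (D : Matrix (Fin m × Fin 2) (Fin m × Fin 2) ℝ)
    (hA : A = J n * R + (1 / 2 : ℝ) • (B * J m * Bᵀ * J n))
    (hC : C = J m * Bᵀ * J n)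
    (hD : D = 1) :
    A * J n + J n * Aᵀ + B * J m * Bᵀ = 0 ∧
    J n * Cᵀ + B * J m * Dᵀ = 0 ∧
    D * J m * Dᵀ = J m := by
  have hJn := J_transpose n
  have hJm := J_transpose m
  have hJJn := J_mul_J n
  have hJJm := J_mul_J m
  refine ⟨?_, ?_, ?_⟩
  · set X := B * J m * Bᵀ with hX
    have hXt : Xᵀ = -X := by
      simp only [hX, Matrix.transpose_mul, hJm, Matrix.transpose_transpose]
      simp [Matrix.mul_assoc, Matrix.neg_mul, Matrix.mul_neg]
    have hAT : Aᵀ = -(R * J n) + (1 / 2 : ℝ) • (J n * X) := by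
      rw [hA, Matrix.transpose_add, Matrix.transpose_smul, Matrix.transpose_mul,
        Matrix.transpose_mul, hJn, hR, hXt]
      simp [Matrix.neg_mul, Matrix.mul_neg]
    have h1 : X * J n * J n = -X := by
      rw [Matrix.mul_assoc, hJJn]; simp
    have h2 : J n * (J n * X) = -X := by
      rw [← Matrix.mul_assoc, hJJn]; simp
    rw [hAT, hA, Matrix.add_mul, Matrix.mul_add, Matrix.smul_mul, Matrix.mul_smul,
      h1, h2, Matrix.mul_neg, Matrix.mul_assoc]
    module
  · subst hC hD
    simp only [Matrix.transpose_mul, hJn, hJm, Matrix.transpose_transpose,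
      Matrix.transpose_one, Matrix.mul_one]
    simp only [Matrix.mul_neg, Matrix.neg_mul, neg_neg, ← Matrix.mul_assoc, hJJn]
    simp [Matrix.mul_assoc]
  · subst hD
    simp
end
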